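/- arXiv:2408.05257 — 7 statements merged into one kernel-verified Lean document; each statement's English description precedes it below -/
import Mathlib

section
/- Let d ≥ 1, let p₁,…,p_d be real numbers, let 0 < a < b < ∞, and let γ : (a,b) → ℝ^d be differentiable with ∑_{i=1}^d s^{2p_i}·(γ_i'(s))² < 1 for all s ∈ (a,b). Then γ is Lipschitz continuous with Lipschitz constant 1/√C, where C = min_{i=1,…,d} min_{s∈[a,b]} s^{2p_i} > 0; in particular the limits of γ(s) as s → b⁻ and as s → a⁺ exist in ℝ^d. -/
open Filter Set Topology

lemma exists_tendsto_of_lipschitzOnWith {E : Type*} [NormedAddCommGroup E] [CompleteSpace E]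
    {K : NNReal} {s : Set ℝ} {f : ℝ → E} (h : LipschitzOnWith K f s) {x : ℝ}
    (hx : x ∈ closure s) :
    ∃ L : E, Tendsto f (𝓝[s] x) (𝓝 L) := by
  have hne : (𝓝[s] x).NeBot := mem_closure_iff_nhdsWithin_neBot.mp hx
  have hl : Cauchy (𝓝[s] x) := cauchy_nhds.mono nhdsWithin_le_nhds
  have hcm : Cauchy (Filter.map f (𝓝[s] x)) := by
    refine ⟨hne.map f, ?_⟩
    have h1 : (𝓝[s] x) ×ˢ (𝓝[s] x) ≤ uniformity ℝ ⊓ Filter.principal (s ×ˢ s) :=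
      le_inf hl.2 (Filter.prod_mono (le_principal_iff.mpr self_mem_nhdsWithin)
        (le_principal_iff.mpr self_mem_nhdsWithin) |>.trans_eq (Filter.prod_principal_principal ..))
    calc Filter.map f (𝓝[s] x) ×ˢ Filter.map f (𝓝[s] x)
        = Filter.map (fun p : ℝ × ℝ => (f p.1, f p.2)) ((𝓝[s] x) ×ˢ (𝓝[s] x)) :=
          (Filter.prod_map_map_eq ..)
      _ ≤ Filter.map (fun p : ℝ × ℝ => (f p.1, f p.2)) (uniformity ℝ ⊓ Filter.principal (s ×ˢ s)) :=
          Filter.map_mono h1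
      _ ≤ uniformity E := h.uniformContinuousOn
  obtain ⟨L, hL⟩ := CompleteSpace.complete hcm
  exact ⟨L, hL⟩

/-- A curve `s ↦ (s, γ(s))` in the Kasner spacetime that is timelike
(`∑ s^{2pᵢ} γᵢ'(s)² < 1`) on `(a,b)` with `0 < a < b < ∞` is Lipschitz with
constant `1/√C`, where `C = min_{i} min_{s ∈ [a,b]} s^{2pᵢ} > 0`; in particular
the limits of `γ(s)` as `s → b⁻` and `s → a⁺` exist in `ℝ^d`. -/
theorem kasner_timelike_curve_lipschitz
    (d : ℕ) (hd : 1 ≤ d) (p : Fin d → ℝ) (a b : ℝ) (ha : 0 < a) (hab : a < b)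
    (γ γ' : ℝ → Fin d → ℝ)
    (hderiv : ∀ s ∈ Set.Ioo a b, HasDerivAt γ (γ' s) s)
    (htimelike : ∀ s ∈ Set.Ioo a b, ∑ i, s ^ (2 * p i) * (γ' s i) ^ 2 < 1) :
    0 < (⨅ i : Fin d, ⨅ s : Set.Icc a b, ((s : ℝ) ^ (2 * p i))) ∧
    LipschitzOnWith
      (Real.toNNReal (1 / Real.sqrt (⨅ i : Fin d, ⨅ s : Set.Icc a b, ((s : ℝ) ^ (2 * p i)))))
      γ (Set.Ioo a b) ∧
    (∃ L : Fin d → ℝ, Filter.Tendsto γ (nhdsWithin b (Set.Ioo a b)) (nhds L)) ∧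
    (∃ L : Fin d → ℝ, Filter.Tendsto γ (nhdsWithin a (Set.Ioo a b)) (nhds L)) := by
  haveI : Nonempty (Fin d) := ⟨⟨0, hd⟩⟩
  haveI : Nonempty (Set.Icc a b) := ⟨⟨a, le_refl a, hab.le⟩⟩
  set I : Fin d → ℝ := fun i => ⨅ s : Set.Icc a b, ((s : ℝ) ^ (2 * p i)) with hI
  set C : ℝ := ⨅ i : Fin d, I i with hC
  -- positivity of each inner infimum
  have hIpos : ∀ i, 0 < I i := by
    intro i
    have hcont : ContinuousOn (fun s : ℝ => s ^ (2 * p i)) (Set.Icc a b) := by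
      apply ContinuousOn.rpow_const continuousOn_id
      intro x hx
      exact Or.inl (ne_of_gt (lt_of_lt_of_le ha hx.1))
    obtain ⟨x₀, hx₀, hmin⟩ := isCompact_Icc.exists_isMinOn ⟨a, le_refl a, hab.le⟩ hcont
    have h0 : 0 < x₀ ^ (2 * p i) :=
      Real.rpow_pos_of_pos (lt_of_lt_of_le ha hx₀.1) _
    refine lt_of_lt_of_le h0 (le_ciInf fun s => hmin s.2)
  have hIle : ∀ i, ∀ s : ℝ, s ∈ Set.Icc a b → I i ≤ s ^ (2 * p i) := by
    intro i s hsm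
    refine ciInf_le ⟨0, ?_⟩ (⟨s, hsm⟩ : Set.Icc a b)
    rintro y ⟨t, rfl⟩
    exact (Real.rpow_pos_of_pos (lt_of_lt_of_le ha t.2.1) _).le
  have hCpos : 0 < C := by
    obtain ⟨i₀, hi₀⟩ := Finite.exists_min I
    exact lt_of_lt_of_le (hIpos i₀) (le_ciInf hi₀)
  have hCle : ∀ i, C ≤ I i := fun i =>
    ciInf_le (Set.Finite.bddBelow (Set.finite_range I)) i
  have hbound : ∀ s ∈ Set.Ioo a b,
      ‖γ' s‖₊ ≤ Real.toNNReal (1 / Real.sqrt C) := by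
    intro s hs
    have hsum : ∑ i, C * (γ' s i) ^ 2 < 1 := by
      refine lt_of_le_of_lt (Finset.sum_le_sum fun i _ => ?_) (htimelike s hs)
      exact mul_le_mul_of_nonneg_right
        ((hCle i).trans (hIle i s ⟨hs.1.le, hs.2.le⟩)) (sq_nonneg _)
    rw [← Finset.mul_sum] at hsum
    have hsum2 : ∑ i, (γ' s i) ^ 2 ≤ 1 / C := by
      rw [le_div_iff₀ hCpos, mul_comm]
      exact hsum.le
    have hcoord : ∀ i, |γ' s i| ≤ 1 / Real.sqrt C := by
      intro i
      have h1 : (γ' s i) ^ 2 ≤ 1 / C :=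
        le_trans (Finset.single_le_sum (fun j _ => sq_nonneg (γ' s j))
          (Finset.mem_univ i)) hsum2
      have := Real.sqrt_le_sqrt h1
      rwa [Real.sqrt_sq_eq_abs, one_div, Real.sqrt_inv, ← one_div] at this
    rw [← NNReal.coe_le_coe, coe_nnnorm, Real.coe_toNNReal _ (by positivity)]
    refine (pi_norm_le_iff_of_nonneg (by positivity)).mpr fun i => ?_
    rw [Real.norm_eq_abs]
    exact hcoord i
  have hlip := (convex_Ioo a b).lipschitzOnWith_of_nnnorm_hasDerivWithin_le
    (fun x hx => (hderiv x hx).hasDerivWithinAt) hbound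
  refine ⟨hCpos, hlip, ?_, ?_⟩
  · exact exists_tendsto_of_lipschitzOnWith hlip
      (by rw [closure_Ioo hab.ne]; exact ⟨hab.le, le_refl b⟩)
  · exact exists_tendsto_of_lipschitzOnWith hlip
      (by rw [closure_Ioo hab.ne]; exact ⟨le_refl a, hab.le⟩)
end

section
/- Let d ≥ 1, let p₁,…,p_d be real numbers, let 0 < a ≤ b, and let u, v : [a,b] → ℝ^d be differentiable curves with ∑_{i=1}^d s^{2p_i}·(u_i'(s))² < 1 and ∑_{i=1}^d s^{2p_i}·(v_i'(s))² < 1 for all s ∈ [a,b]. Then for every λ ∈ [0,1] and every s ∈ [a,b], ∑_{i=1}^d s^{2p_i}·((1−λ)·u_i'(s) + λ·v_i'(s))² < 1. Hence the linear interpolation Γ(λ,s) = (s, (1−λ)·u(s) + λ·v(s)) is, for each λ, a timelike curve in the Kasner spacetime; in particular, if u and v have the same endpoints, Γ is a timelike homotopy with fixed endpoints, so the Kasner spacetime is future one-connected. -/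
/-- Convexity of the Kasner timelike condition: if `u` and `v` are timelike
(`∑ s^{2pᵢ}(uᵢ')² < 1` and likewise for `v`) then so is every convex combination,
hence the linear interpolation is a timelike homotopy and the Kasner spacetime is
future one-connected. -/
theorem kasner_timelike_convex_combination
    (d : ℕ) (hd : 1 ≤ d) (p : Fin d → ℝ) (a b : ℝ) (ha : 0 < a) (hab : a ≤ b)
    (u v u' v' : ℝ → Fin d → ℝ)
    (hu : ∀ s ∈ Set.Icc a b, HasDerivWithinAt u (u' s) (Set.Icc a b) s)
    (hv : ∀ s ∈ Set.Icc a b, HasDerivWithinAt v (v' s) (Set.Icc a b) s)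
    (hut : ∀ s ∈ Set.Icc a b, ∑ i, s ^ (2 * p i) * (u' s i) ^ 2 < 1)
    (hvt : ∀ s ∈ Set.Icc a b, ∑ i, s ^ (2 * p i) * (v' s i) ^ 2 < 1) :
    ∀ lam ∈ Set.Icc (0 : ℝ) 1, ∀ s ∈ Set.Icc a b,
      ∑ i, s ^ (2 * p i) * ((1 - lam) * u' s i + lam * v' s i) ^ 2 < 1 := by
  intro lam hlam s hs
  obtain ⟨h0, h1⟩ := hlam
  have hs0 : (0:ℝ) < s := lt_of_lt_of_le ha hs.1
  have key : ∑ i, s ^ (2 * p i) * ((1 - lam) * u' s i + lam * v' s i) ^ 2 ≤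
      (1 - lam) * ∑ i, s ^ (2 * p i) * (u' s i) ^ 2 +
      lam * ∑ i, s ^ (2 * p i) * (v' s i) ^ 2 := by
    rw [Finset.mul_sum, Finset.mul_sum, ← Finset.sum_add_distrib]
    apply Finset.sum_le_sum
    intro i _
    have hc : 0 ≤ s ^ (2 * p i) := Real.rpow_nonneg hs0.le _
    nlinarith [mul_nonneg hc (mul_nonneg (mul_nonneg h0 (sub_nonneg.2 h1))
      (sq_nonneg (u' s i - v' s i)))]
  have h2 := hut s hs
  have h3 := hvt s hs
  rcases eq_or_lt_of_le h0 with h | h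
  · calc _ ≤ _ := key
      _ < 1 := by rw [← h]; simpa using h2
  · have hp : 0 < lam * (1 - ∑ i, s ^ (2 * p i) * (v' s i) ^ 2) :=
      mul_pos h (sub_pos.2 h3)
    have hq : 0 ≤ (1 - lam) * (1 - ∑ i, s ^ (2 * p i) * (u' s i) ^ 2) :=
      mul_nonneg (sub_nonneg.2 h1) (sub_pos.2 h2).le
    nlinarith [key]
end

section
/- Let d ≥ 1, let k₁,…,k_d be real numbers, let p₁,…,p_d be real numbers with p_i ≥ −1 for all i, let b ∈ (0,∞], and let f : [0,b) → ℝ be differentiable with f(s) ≥ 1 and f'(s)² = 1 + ∑_{i=1}^d f(s)^{−2p_i}·k_i² for all s ∈ [0,b). Then f(s) ≤ f(0)·exp(s·√(1 + ∑_{i=1}^d k_i²)) for all s ∈ [0,b). In particular, if f(s) → ∞ as s → b⁻, then b = ∞; this is the key estimate showing that the Kasner spacetime is future timelike geodesically complete. -/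
/-- Key estimate for future timelike geodesic completeness of the Kasner
spacetime: if `f ≥ 1` satisfies the geodesic equation
`f'² = 1 + ∑ f^{-2pᵢ} kᵢ²` with all `pᵢ ≥ -1`, then
`f(s) ≤ f(0)·exp(s·√(1 + ∑ kᵢ²))`; in particular `f` cannot blow up in finite
parameter time. -/
theorem kasner_geodesic_t_growth_bound
    (d : ℕ) (hd : 1 ≤ d) (k p : Fin d → ℝ) (hp : ∀ i, -1 ≤ p i)
    (b : ℝ) (hb : 0 < b) (f f' : ℝ → ℝ)
    (hf1 : ∀ s ∈ Set.Ico 0 b, 1 ≤ f s)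
    (hderiv : ∀ s ∈ Set.Ico 0 b, HasDerivWithinAt f (f' s) (Set.Ico 0 b) s)
    (hgeo : ∀ s ∈ Set.Ico 0 b, (f' s) ^ 2 = 1 + ∑ i, (f s) ^ (-(2 * p i)) * (k i) ^ 2) :
    (∀ s ∈ Set.Ico 0 b, f s ≤ f 0 * Real.exp (s * Real.sqrt (1 + ∑ i, (k i) ^ 2))) ∧
    ¬ Filter.Tendsto f (nhdsWithin b (Set.Iio b)) Filter.atTop := by
  set K : ℝ := Real.sqrt (1 + ∑ i, (k i) ^ 2) with hK
  have hsum : (0:ℝ) ≤ ∑ i, (k i) ^ 2 := Finset.sum_nonneg fun i _ => sq_nonneg _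
  have hKpos : 0 ≤ K := Real.sqrt_nonneg _
  have hf0 : 1 ≤ f 0 := hf1 0 ⟨le_refl 0, hb⟩
  -- pointwise bound |f' s| ≤ K * |f s|
  have hbound : ∀ s ∈ Set.Ico 0 b, ‖f' s‖ ≤ K * ‖f s‖ + 0 := by
    intro s hs
    have h1 : 1 ≤ f s := hf1 s hs
    have hfs : (0:ℝ) < f s := lt_of_lt_of_le one_pos h1
    have hterm : ∀ i : Fin d, (f s) ^ (-(2 * p i)) * (k i) ^ 2 ≤ (f s)^2 * (k i)^2 := by
      intro i
      have hexp : -(2 * p i) ≤ 2 := by nlinarith [hp i]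
      have := Real.rpow_le_rpow_of_exponent_le h1 hexp
      have h2 : (f s) ^ (2:ℝ) = (f s)^2 := by
        rw [show (2:ℝ) = ((2:ℕ):ℝ) by norm_num, Real.rpow_natCast]
      rw [h2] at this
      exact mul_le_mul_of_nonneg_right this (sq_nonneg _)
    have hsq : (f' s)^2 ≤ (f s)^2 * (1 + ∑ i, (k i)^2) := by
      have := hgeo s hs
      have hsumle : ∑ i, (f s) ^ (-(2 * p i)) * (k i) ^ 2 ≤ ∑ i, (f s)^2 * (k i)^2 :=
        Finset.sum_le_sum fun i _ => hterm i
      have h1f : (1:ℝ) ≤ (f s)^2 := by nlinarith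
      rw [this]
      rw [← Finset.mul_sum] at hsumle
      nlinarith
    have : |f' s| ≤ |f s| * K := by
      have h1 : |f' s| = Real.sqrt ((f' s)^2) := (Real.sqrt_sq_eq_abs _).symm
      have h2 : |f s| * K = Real.sqrt ((f s)^2 * (1 + ∑ i, (k i)^2)) := by
        rw [Real.sqrt_mul (sq_nonneg _), Real.sqrt_sq_eq_abs]
      rw [h1, h2]
      exact Real.sqrt_le_sqrt hsq
    simpa [Real.norm_eq_abs, mul_comm] using this
  have key : ∀ s ∈ Set.Ico 0 b, f s ≤ f 0 * Real.exp (s * K) := by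
    intro s hs
    have hsub : Set.Icc 0 s ⊆ Set.Ico 0 b := fun x hx => ⟨hx.1, lt_of_le_of_lt hx.2 hs.2⟩
    have hcont : ContinuousOn f (Set.Icc 0 s) :=
      fun x hx => ((hderiv x (hsub hx)).continuousWithinAt).mono hsub
    have hderiv' : ∀ x ∈ Set.Ico 0 s, HasDerivWithinAt f (f' x) (Set.Ici x) x := by
      intro x hx
      have hx' : x ∈ Set.Ico 0 b := ⟨hx.1, lt_of_lt_of_le hx.2 hs.2.le⟩
      refine (hderiv x hx').mono_of_mem_nhdsWithin ?_
      rw [mem_nhdsWithin]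
      exact ⟨Set.Iio b, isOpen_Iio, hx'.2, fun y hy => ⟨le_trans hx'.1 hy.2, hy.1⟩⟩
    have ha : ‖f 0‖ ≤ f 0 := le_of_eq (by rw [Real.norm_eq_abs, abs_of_pos (by linarith)])
    have := norm_le_gronwallBound_of_norm_deriv_right_le hcont hderiv' ha
      (fun x hx => hbound x (hsub ⟨hx.1, hx.2.le⟩)) s ⟨hs.1, le_refl s⟩
    rw [gronwallBound_ε0, sub_zero] at this
    calc f s ≤ ‖f s‖ := le_abs_self _
      _ ≤ f 0 * Real.exp (K * s) := this
      _ = f 0 * Real.exp (s * K) := by rw [mul_comm K s]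
  refine ⟨key, ?_⟩
  intro htend
  have hM : ∀ᶠ s in nhdsWithin b (Set.Iio b), f 0 * Real.exp (b * K) + 1 ≤ f s :=
    htend.eventually_ge_atTop _
  have hmem : ∀ᶠ s in nhdsWithin b (Set.Iio b), s ∈ Set.Ico 0 b := by
    filter_upwards [self_mem_nhdsWithin,
      eventually_nhdsWithin_of_eventually_nhds (eventually_gt_nhds hb)] with s h1 h2
    exact ⟨h2.le, h1⟩
  have hfalse : ∀ᶠ s in nhdsWithin b (Set.Iio b), False := by
    filter_upwards [hM, hmem] with s h1 h2
    have h3 := key s h2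
    have h4 : Real.exp (s * K) ≤ Real.exp (b * K) :=
      Real.exp_le_exp.2 (mul_le_mul_of_nonneg_right h2.2.le hKpos)
    nlinarith [Real.exp_pos (b * K), (hf1 s h2)]
  haveI : (nhdsWithin b (Set.Iio b)).NeBot := nhdsLT_neBot b
  exact hfalse.exists.choose_spec
end

section
/- Let d ≥ 1, let p₁,…,p_d be real numbers with p_i < 1 for all i, let T > 0, and let γ : (0,T] → ℝ^d be differentiable with ∑_{i=1}^d s^{2p_i}·(γ_i'(s))² < 1 for all s ∈ (0,T]. Then for every index i and all s, s̃ ∈ (0,T], |γ_i(s) − γ_i(s̃)| ≤ T^{1−p_i}/(1−p_i). In particular, for every ε > 0 there exists T > 0, depending only on ε and the exponents, such that every such timelike curve satisfies |γ_i(s) − γ_i(s̃)| < ε for all s, s̃ ∈ (0,T]. -/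
private lemma kasner_key {q : ℝ} (hq : q < 1) {T : ℝ} (hT : 0 < T) {f f' : ℝ → ℝ}
    (hf : ∀ s ∈ Set.Ioc 0 T, HasDerivWithinAt f (f' s) (Set.Ioc 0 T) s)
    (hb : ∀ s ∈ Set.Ioc 0 T, |f' s| ≤ s ^ (-q)) :
    ∀ s ∈ Set.Ioc 0 T, ∀ t ∈ Set.Ioc 0 T, |f s - f t| ≤ T ^ (1 - q) / (1 - q) := by
  have h1q : (0:ℝ) < 1 - q := by linarith
  set g : ℝ → ℝ := fun s => s ^ (1 - q) / (1 - q) with hg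
  have hgd : ∀ s ∈ Set.Ioc 0 T, HasDerivAt g (s ^ (-q)) s := by
    intro s hs
    have h := (Real.hasDerivAt_rpow_const (x := s) (p := 1 - q) (Or.inl hs.1.ne')).div_const (1 - q)
    have : (1 - q) * s ^ (1 - q - 1) / (1 - q) = s ^ (-q) := by
      rw [mul_comm, mul_div_assoc, div_self h1q.ne', mul_one]
      norm_num
    rwa [this] at h
  have hint : interior (Set.Ioc (0:ℝ) T) = Set.Ioo 0 T := interior_Ioc
  have mono : ∀ c : ℝ, c = 1 ∨ c = -1 →
      MonotoneOn (fun s => g s + c * f s) (Set.Ioc 0 T) := by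
    intro c hc
    apply monotoneOn_of_hasDerivWithinAt_nonneg (f' := fun s => s ^ (-q) + c * f' s)
      (convex_Ioc 0 T)
    · intro x hx
      exact ((hgd x hx).continuousAt.continuousWithinAt).add
        (((hf x hx).continuousWithinAt).const_mul c)
    · intro x hx
      rw [hint] at hx ⊢
      have hx' : x ∈ Set.Ioc 0 T := Set.Ioo_subset_Ioc_self hx
      exact ((hgd x hx').hasDerivWithinAt).add
        (((hf x hx').mono Set.Ioo_subset_Ioc_self).const_mul c)
    · intro x hx
      rw [hint] at hx
      have hx' : x ∈ Set.Ioc 0 T := Set.Ioo_subset_Ioc_self hx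
      have h1 := abs_le.1 (hb x hx')
      rcases hc with rfl | rfl <;> nlinarith [h1.1, h1.2]
  have hg0 : ∀ s ∈ Set.Ioc 0 T, 0 ≤ g s := fun s hs =>
    div_nonneg (Real.rpow_nonneg hs.1.le _) h1q.le
  have hgT : ∀ s ∈ Set.Ioc 0 T, g s ≤ T ^ (1 - q) / (1 - q) := fun s hs => by
    have := Real.rpow_le_rpow hs.1.le hs.2 h1q.le
    exact (div_le_div_iff_of_pos_right h1q).2 this
  have key : ∀ s ∈ Set.Ioc 0 T, ∀ t ∈ Set.Ioc 0 T, s ≤ t →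
      |f s - f t| ≤ T ^ (1 - q) / (1 - q) := by
    intro s hs t ht hst
    have m1 := mono 1 (Or.inl rfl) hs ht hst
    have m2 := mono (-1) (Or.inr rfl) hs ht hst
    simp only [one_mul, neg_one_mul, neg_mul] at m1 m2
    have := hg0 s hs
    have := hgT t ht
    rw [abs_le]
    constructor <;> nlinarith
  intro s hs t ht
  rcases le_total s t with h | h
  · exact key s hs t ht h
  · rw [abs_sub_comm]; exact key t ht s hs h

private lemma kasner_deriv_bound {d : ℕ} {p : Fin d → ℝ} {T : ℝ} {γ' : ℝ → Fin d → ℝ}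
    (htl : ∀ s ∈ Set.Ioc 0 T, ∑ i, s ^ (2 * p i) * (γ' s i) ^ 2 < 1)
    (i : Fin d) : ∀ s ∈ Set.Ioc 0 T, |γ' s i| ≤ s ^ (-p i) := by
  intro s hs
  have hsp : 0 < s ^ p i := Real.rpow_pos_of_pos hs.1 _
  have hterm : s ^ (2 * p i) * (γ' s i) ^ 2 < 1 := by
    refine lt_of_le_of_lt ?_ (htl s hs)
    apply Finset.single_le_sum (f := fun j => s ^ (2 * p j) * (γ' s j) ^ 2)
      (fun j _ => mul_nonneg (Real.rpow_nonneg hs.1.le _) (sq_nonneg _)) (Finset.mem_univ i)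
  have hrw : s ^ (2 * p i) = (s ^ p i) ^ 2 := by
    rw [← Real.rpow_natCast (s ^ p i) 2, ← Real.rpow_mul hs.1.le]
    norm_num [mul_comm]
  have h2 : (s ^ p i * γ' s i) ^ 2 < 1 := by
    rw [mul_pow, ← hrw]; exact hterm
  have h3 : |s ^ p i * γ' s i| ≤ 1 := by nlinarith [abs_nonneg (s ^ p i * γ' s i), sq_abs (s ^ p i * γ' s i)]
  rw [abs_mul, abs_of_pos hsp] at h3
  rw [Real.rpow_neg hs.1.le, inv_eq_one_div, le_div_iff₀ hsp, mul_comm]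
  exact h3

/-- Spatial coordinates of timelike curves near the Kasner singularity: if all
`pᵢ < 1`, then for every timelike curve `s ↦ (s, γ(s))` on `(0,T]`
(`∑ s^{2pᵢ} γᵢ'(s)² < 1`) one has `|γᵢ(s) - γᵢ(s̃)| ≤ T^{1-pᵢ}/(1-pᵢ)`; in
particular for every `ε > 0` there is `T > 0`, depending only on `ε` and the
exponents, such that every such curve satisfies `|γᵢ(s) - γᵢ(s̃)| < ε`. -/
theorem kasner_spatial_coordinate_bound
    (d : ℕ) (hd : 1 ≤ d) (p : Fin d → ℝ) (hp : ∀ i, p i < 1) :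
    (∀ T : ℝ, 0 < T → ∀ γ γ' : ℝ → Fin d → ℝ,
      (∀ s ∈ Set.Ioc 0 T, HasDerivWithinAt γ (γ' s) (Set.Ioc 0 T) s) →
      (∀ s ∈ Set.Ioc 0 T, ∑ i, s ^ (2 * p i) * (γ' s i) ^ 2 < 1) →
      ∀ i, ∀ s ∈ Set.Ioc 0 T, ∀ t ∈ Set.Ioc 0 T,
        |γ s i - γ t i| ≤ T ^ (1 - p i) / (1 - p i)) ∧
    (∀ ε : ℝ, 0 < ε → ∃ T : ℝ, 0 < T ∧
      ∀ γ γ' : ℝ → Fin d → ℝ,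
        (∀ s ∈ Set.Ioc 0 T, HasDerivWithinAt γ (γ' s) (Set.Ioc 0 T) s) →
        (∀ s ∈ Set.Ioc 0 T, ∑ i, s ^ (2 * p i) * (γ' s i) ^ 2 < 1) →
        ∀ i, ∀ s ∈ Set.Ioc 0 T, ∀ t ∈ Set.Ioc 0 T,
          |γ s i - γ t i| < ε) := by
  have part1 : ∀ T : ℝ, 0 < T → ∀ γ γ' : ℝ → Fin d → ℝ,
      (∀ s ∈ Set.Ioc 0 T, HasDerivWithinAt γ (γ' s) (Set.Ioc 0 T) s) →
      (∀ s ∈ Set.Ioc 0 T, ∑ i, s ^ (2 * p i) * (γ' s i) ^ 2 < 1) →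
      ∀ i, ∀ s ∈ Set.Ioc 0 T, ∀ t ∈ Set.Ioc 0 T,
        |γ s i - γ t i| ≤ T ^ (1 - p i) / (1 - p i) := by
    intro T hT γ γ' hder htl i
    have hfi : ∀ s ∈ Set.Ioc 0 T, HasDerivWithinAt (fun s => γ s i) (γ' s i) (Set.Ioc 0 T) s := by
      intro s hs
      exact (hasDerivWithinAt_pi.1 (hder s hs)) i
    exact kasner_key (hp i) hT hfi (kasner_deriv_bound htl i)
  refine ⟨part1, ?_⟩
  intro ε hε
  have hev : ∀ i : Fin d, ∀ᶠ T in nhdsWithin (0:ℝ) (Set.Ioi 0),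
      T ^ (1 - p i) / (1 - p i) < ε := by
    intro i
    have h1q : (0:ℝ) < 1 - p i := by linarith [hp i]
    have htend : Filter.Tendsto (fun T : ℝ => T ^ (1 - p i) / (1 - p i))
        (nhdsWithin 0 (Set.Ioi 0)) (nhds 0) := by
      have hc : Filter.Tendsto (fun T : ℝ => T ^ (1 - p i)) (nhds 0) (nhds 0) := by
        have := (Real.continuousAt_rpow_const 0 (1 - p i) (Or.inr h1q.le)).tendsto
        rwa [Real.zero_rpow h1q.ne'] at this
      have := (hc.mono_left (nhdsWithin_le_nhds (s := Set.Ioi 0))).div_const (1 - p i)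
      simpa using this
    exact htend.eventually_lt_const hε
  have hall := (Filter.eventually_all.2 hev).and (eventually_mem_nhdsWithin)
  obtain ⟨T, hTprop, hT0⟩ := hall.exists
  refine ⟨T, hT0, ?_⟩
  intro γ γ' hder htl i s hs t ht
  exact lt_of_le_of_lt (part1 T hT0 γ γ' hder htl i s hs t ht) (hTprop i)
end

section
/- Let d ≥ 1, let p₁,…,p_d be real numbers with p_i < 1 for all i, let b > 0, and let γ : (0,b) → ℝ^d be differentiable with ∑_{i=1}^d s^{2p_i}·(γ_i'(s))² < 1 for all s ∈ (0,b). Then the limit of γ(s) as s → 0⁺ exists in ℝ^d; i.e. the spatial coordinates of any timelike curve in the Kasner spacetime converge as the curve approaches the singularity t = 0. -/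
/-- The spatial coordinates of a timelike curve `s ↦ (s, γ(s))` in the Kasner
spacetime with all `pᵢ < 1` converge as the curve approaches the singularity
`t = 0`. -/
theorem kasner_spatial_limit_at_singularity
    (d : ℕ) (hd : 1 ≤ d) (p : Fin d → ℝ) (hp : ∀ i, p i < 1)
    (b : ℝ) (hb : 0 < b) (γ γ' : ℝ → Fin d → ℝ)
    (hderiv : ∀ s ∈ Set.Ioo 0 b, HasDerivAt γ (γ' s) s)
    (htimelike : ∀ s ∈ Set.Ioo 0 b, ∑ i, s ^ (2 * p i) * (γ' s i) ^ 2 < 1) :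
    ∃ L : Fin d → ℝ, Filter.Tendsto γ (nhdsWithin 0 (Set.Ioo 0 b)) (nhds L) := by
  have key : ∀ i : Fin d, ∃ Li : ℝ,
      Filter.Tendsto (fun s => γ s i) (nhdsWithin 0 (Set.Ioo 0 b)) (nhds Li) := by
    intro i
    set q := p i with hq
    have hq1 : q < 1 := hp i
    have hq0 : (0:ℝ) < 1 - q := by linarith
    set C : ℝ := 1 / (1 - q) with hC
    have hCpos : 0 < C := by positivity
    -- derivative bound |γ' s i| < s ^ (-q)
    have hbound : ∀ s ∈ Set.Ioo (0:ℝ) b, |γ' s i| < s ^ (-q) := by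
      intro s hs
      have hs0 : (0:ℝ) < s := hs.1
      have hterm : s ^ (2 * q) * (γ' s i) ^ 2 < 1 := by
        refine lt_of_le_of_lt ?_ (htimelike s hs)
        apply Finset.single_le_sum (f := fun j => s ^ (2 * p j) * (γ' s j) ^ 2)
          (fun j _ => by positivity) (Finset.mem_univ i)
      have hsplit : s ^ (2 * q) = (s ^ q) ^ 2 := by
        rw [two_mul, Real.rpow_add hs0]; ring
      have hspos : (0:ℝ) < s ^ q := Real.rpow_pos_of_pos hs0 q
      have hneg : s ^ (-q) = (s ^ q)⁻¹ := Real.rpow_neg hs0.le q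
      rw [hsplit] at hterm
      have key : |γ' s i| * s ^ q < 1 := by
        nlinarith [sq_abs (γ' s i), abs_nonneg (γ' s i), mul_pos hspos hspos]
      rw [hneg, ← one_div, lt_div_iff₀ hspos]
      exact key
    -- component derivative
    have hdi : ∀ s ∈ Set.Ioo (0:ℝ) b, HasDerivAt (fun t => γ t i) (γ' s i) s := by
      intro s hs
      exact hasDerivAt_pi.1 (hderiv s hs) i
    -- auxiliary functions
    set F : ℝ → ℝ := fun s => γ s i + C * s ^ (1 - q) with hF
    set G : ℝ → ℝ := fun s => γ s i - C * s ^ (1 - q) with hG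
    have hrpow : ∀ s ∈ Set.Ioo (0:ℝ) b,
        HasDerivAt (fun t : ℝ => C * t ^ (1 - q)) (s ^ (-q)) s := by
      intro s hs
      have h := (Real.hasDerivAt_rpow_const (x := s) (p := 1 - q)
        (Or.inl hs.1.ne')).const_mul C
      refine h.congr_deriv ?_
      rw [show 1 - q - 1 = -q by ring, hC]
      field_simp
    have hFd : ∀ s ∈ Set.Ioo (0:ℝ) b,
        HasDerivAt F (γ' s i + s ^ (-q)) s := by
      intro s hs
      exact (hdi s hs).add (hrpow s hs)
    have hGd : ∀ s ∈ Set.Ioo (0:ℝ) b,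
        HasDerivAt G (γ' s i - s ^ (-q)) s := by
      intro s hs
      exact (hdi s hs).sub (hrpow s hs)
    have hint : interior (Set.Ioo (0:ℝ) b) = Set.Ioo 0 b := interior_Ioo
    have hFmono : MonotoneOn F (Set.Ioo 0 b) := by
      apply monotoneOn_of_deriv_nonneg (convex_Ioo 0 b)
      · intro s hs; exact (hFd s hs).continuousAt.continuousWithinAt
      · rw [hint]; intro s hs; exact (hFd s hs).differentiableAt.differentiableWithinAt
      · rw [hint]; intro s hs
        rw [(hFd s hs).deriv]
        have h1 := hbound s hs
        have h2 : 0 < s ^ (-q) := Real.rpow_pos_of_pos hs.1 (-q)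
        have : -|γ' s i| ≤ γ' s i := neg_abs_le _
        linarith
    have hGanti : AntitoneOn G (Set.Ioo 0 b) := by
      apply antitoneOn_of_deriv_nonpos (convex_Ioo 0 b)
      · intro s hs; exact (hGd s hs).continuousAt.continuousWithinAt
      · rw [hint]; intro s hs; exact (hGd s hs).differentiableAt.differentiableWithinAt
      · rw [hint]; intro s hs
        rw [(hGd s hs).deriv]
        have h1 := hbound s hs
        have h2 : 0 < s ^ (-q) := Real.rpow_pos_of_pos hs.1 (-q)
        have : γ' s i ≤ |γ' s i| := le_abs_self _
        linarith
    -- bounded below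
    have hmem : b / 2 ∈ Set.Ioo (0:ℝ) b := ⟨by linarith, by linarith⟩
    have hbdd : BddBelow (F '' Set.Ioo 0 b) := by
      refine ⟨min (G (b/2)) (F (b/2)), ?_⟩
      rintro _ ⟨s, hs, rfl⟩
      rcases le_or_gt s (b/2) with h | h
      · have hGs : G (b/2) ≤ G s := hGanti hs hmem h
        have hFG : G s ≤ F s := by
          have : 0 ≤ C * s ^ (1 - q) :=
            mul_nonneg hCpos.le (Real.rpow_nonneg hs.1.le _)
          simp only [hF, hG]; linarith
        exact le_trans (min_le_left _ _) (hGs.trans hFG)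
      · exact le_trans (min_le_right _ _) (hFmono hmem hs h.le)
    have hne : (Set.Ioo (0:ℝ) b).Nonempty := ⟨b/2, hmem⟩
    have hFtend : Filter.Tendsto F (nhdsWithin 0 (Set.Ioi 0))
        (nhds (sInf (F '' Set.Ioo 0 b))) :=
      MonotoneOn.tendsto_nhdsWithin_Ioo_right hne hFmono hbdd
    -- rpow tends to 0
    have hrtend : Filter.Tendsto (fun s : ℝ => C * s ^ (1 - q)) (nhdsWithin 0 (Set.Ioi 0))
        (nhds 0) := by
      have hcont : ContinuousAt (fun s : ℝ => s ^ (1 - q)) 0 :=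
        Real.continuousAt_rpow_const 0 (1 - q) (Or.inr hq0.le)
      have h0 : (0:ℝ) ^ (1 - q) = 0 := Real.zero_rpow hq0.ne'
      have h1 : Filter.Tendsto (fun s : ℝ => s ^ (1 - q)) (nhdsWithin 0 (Set.Ioi 0))
          (nhds ((0:ℝ) ^ (1 - q))) := hcont.tendsto.mono_left nhdsWithin_le_nhds
      have := h1.const_mul C
      rw [h0, mul_zero] at this
      exact this
    have hγtend : Filter.Tendsto (fun s => γ s i) (nhdsWithin 0 (Set.Ioi 0))
        (nhds (sInf (F '' Set.Ioo 0 b))) := by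
      have := hFtend.sub hrtend
      simp only [hF, add_sub_cancel_right, sub_zero] at this
      exact this
    exact ⟨_, hγtend.mono_left (nhdsWithin_mono 0 Set.Ioo_subset_Ioi_self)⟩
  choose L hL using key
  exact ⟨L, tendsto_pi_nhds.2 hL⟩
end

section
/- Let d ≥ 1, let a ∈ (0,1), let L > 0, and let σ : [0,L] → ℝ^{d+1} be a C¹ curve such that ⟨σ'(s), e₀⟩ > a·‖σ'(s)‖ for all s ∈ [0,L], where e₀ = (1,0,…,0), ⟨·,·⟩ is the Euclidean inner product and ‖·‖ the Euclidean norm on ℝ^{d+1}. Then σ(L) ≠ σ(0) and ⟨σ(L) − σ(0), e₀⟩ > a·‖σ(L) − σ(0)‖; that is, the displacement σ(L) − σ(0) lies in the open cone C⁺_a = {X ∈ ℝ^{d+1} : ⟨X, e₀⟩ > a·‖X‖}. -/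
/-- Cone estimate: if a `C¹` curve `σ : [0,L] → ℝ^{d+1}` has velocity everywhere in
the open Euclidean cone `C⁺ₐ = {X : ⟨X,e₀⟩ > a‖X‖}`, then its total displacement
`σ(L) - σ(0)` is nonzero and also lies in `C⁺ₐ`. -/
theorem cone_displacement_estimate
    (d : ℕ) (a L : ℝ) (ha0 : 0 < a) (ha1 : a < 1) (hL : 0 < L)
    (σ σ' : ℝ → EuclideanSpace ℝ (Fin (d + 1)))
    (hderiv : ∀ s ∈ Set.Icc 0 L, HasDerivWithinAt σ (σ' s) (Set.Icc 0 L) s)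
    (hcont : ContinuousOn σ' (Set.Icc 0 L))
    (hcone : ∀ s ∈ Set.Icc 0 L,
      a * ‖σ' s‖ < (inner ℝ (σ' s) (EuclideanSpace.single (0 : Fin (d + 1)) (1 : ℝ)) : ℝ)) :
    σ L ≠ σ 0 ∧
    a * ‖σ L - σ 0‖ <
      (inner ℝ (σ L - σ 0) (EuclideanSpace.single (0 : Fin (d + 1)) (1 : ℝ)) : ℝ) := by
  set e₀ : EuclideanSpace ℝ (Fin (d + 1)) := EuclideanSpace.single (0 : Fin (d + 1)) (1 : ℝ)
  have hσcont : ContinuousOn σ (Set.Icc 0 L) := fun s hs =>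
    (hderiv s hs).continuousWithinAt
  have hint : IntervalIntegrable σ' MeasureTheory.volume 0 L :=
    hcont.intervalIntegrable_of_Icc hL.le
  have hFTC : ∫ s in (0:ℝ)..L, σ' s = σ L - σ 0 := by
    apply intervalIntegral.integral_eq_sub_of_hasDeriv_right_of_le hL.le hσcont _ hint
    intro x hx
    exact (hderiv x (Set.Ioo_subset_Icc_self hx)).mono_of_mem_nhdsWithin
      (Icc_mem_nhdsGT_of_mem ⟨le_of_lt hx.1, hx.2⟩)
  -- key strict inequality between integrals
  have hlt : (∫ s in (0:ℝ)..L, a * ‖σ' s‖) < ∫ s in (0:ℝ)..L, (inner ℝ (σ' s) e₀ : ℝ) := by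
    apply intervalIntegral.integral_lt_integral_of_continuousOn_of_le_of_exists_lt hL
    · exact (hcont.norm.const_smul a : ContinuousOn (fun s => a * ‖σ' s‖) _)
    · exact hcont.inner continuousOn_const
    · exact fun x hx => (hcone x ⟨le_of_lt hx.1, hx.2⟩).le
    · exact ⟨0, Set.left_mem_Icc.2 hL.le, hcone 0 (Set.left_mem_Icc.2 hL.le)⟩
  have hinner : (∫ s in (0:ℝ)..L, (inner ℝ (σ' s) e₀ : ℝ)) = (inner ℝ (σ L - σ 0) e₀ : ℝ) := by
    have := ((innerSL ℝ e₀).intervalIntegral_comp_comm hint)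
    simp only [innerSL_apply_apply] at this
    rw [← hFTC, real_inner_comm, ← this]
    congr 1
    ext s
    exact real_inner_comm _ _
  have hnorm : a * ‖σ L - σ 0‖ ≤ ∫ s in (0:ℝ)..L, a * ‖σ' s‖ := by
    rw [← hFTC, intervalIntegral.integral_const_mul]
    exact mul_le_mul_of_nonneg_left
      (intervalIntegral.norm_integral_le_integral_norm hL.le) ha0.le
  have hmain : a * ‖σ L - σ 0‖ < (inner ℝ (σ L - σ 0) e₀ : ℝ) := by
    calc a * ‖σ L - σ 0‖ ≤ _ := hnorm
    _ < _ := hlt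
    _ = _ := hinner
  refine ⟨fun h => ?_, hmain⟩
  rw [h] at hmain
  simp at hmain
end

section
/- Let δ ∈ (0,1) and let A, B, C, x be real numbers with |A + 1| < δ, |B| < δ, |C − 1| < δ, and A·x² + 2B·x + C ≥ 0. Then |x| ≤ (δ + √(δ² + (1+δ)²))/(1−δ). In particular, the gradient of the graphing function of any Cauchy hypersurface in a chart whose metric components g_{μν} satisfy |g_{μν} − η_{μν}| < δ is bounded by a constant depending only on δ. -/
/-- Quantitative bound on the gradient of the graphing function of a Cauchy
hypersurface: if `|A + 1| < δ`, `|B| < δ`, `|C - 1| < δ` and `A·x² + 2B·x + C ≥ 0`,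
then `|x| ≤ (δ + √(δ² + (1+δ)²))/(1-δ)`. -/
theorem cauchy_graph_gradient_bound
    (δ A B C x : ℝ) (hδ0 : 0 < δ) (hδ1 : δ < 1)
    (hA : |A + 1| < δ) (hB : |B| < δ) (hC : |C - 1| < δ)
    (hquad : 0 ≤ A * x ^ 2 + 2 * B * x + C) :
    |x| ≤ (δ + Real.sqrt (δ ^ 2 + (1 + δ) ^ 2)) / (1 - δ) := by
  obtain ⟨hA1, hA2⟩ := abs_lt.mp hA
  obtain ⟨hB1, hB2⟩ := abs_lt.mp hB
  obtain ⟨hC1, hC2⟩ := abs_lt.mp hC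
  set t := |x| with ht
  have ht0 : 0 ≤ t := abs_nonneg x
  have hx2 : x ^ 2 = t ^ 2 := (sq_abs x).symm
  have hBx : B * x ≤ δ * t := by
    calc B * x ≤ |B * x| := le_abs_self _
    _ = |B| * t := by rw [abs_mul]
    _ ≤ δ * t := by nlinarith [abs_nonneg B, abs_lt.mp hB]
  have key : (1 - δ) * t ^ 2 ≤ 2 * δ * t + (1 + δ) := by nlinarith [sq_nonneg x]
  set s := Real.sqrt (δ ^ 2 + (1 + δ) ^ 2) with hsdef
  have hs : s ^ 2 = δ ^ 2 + (1 + δ) ^ 2 := Real.sq_sqrt (by positivity)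
  have hs0 : 0 ≤ s := Real.sqrt_nonneg _
  rw [le_div_iff₀ (by linarith)]
  nlinarith [key, hs, hs0, ht0, sq_nonneg (t * (1 - δ) - δ - s)]
end
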